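/- Let V be a finite-dimensional real vector space and suppose ρ : ℝ → End(V) is a map satisfying ρ(ab) = ρ(a)ρ(b) for all a, b ∈ ℝ, ρ(1) = id, and each matrix entry of ρ(a) is a polynomial function of a. Then V decomposes as a direct sum V = ⊕_{n ∈ ℕ} V_n of subspaces such that ρ(a) acts on V_n as multiplication by aⁿ for every a ∈ ℝ. -/

import Mathlib

/-!
Polynomiality lets us write `ρ a = ∑ aⁿ • Pₙ` with finitely many `Pₙ ∈ End V`. Comparing
coefficients of `a` and `b` in `ρ (a * b) = ρ a * ρ b` (possible since `ℝ` is infinite) gives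
`Pₘ * Pₖ = δₘₖ Pₘ`, and `ρ 1 = 1` gives `∑ Pₙ = 1`. So the `Pₙ` are complete orthogonal
idempotents, `V` is the internal direct sum of their ranges, and `ρ a * Pₙ = aⁿ • Pₙ`.
-/

open Polynomial Finset

theorem eq_zero_of_forall_sum_pow_smul_eq_zero {K M : Type*} [Field K] [Infinite K]
    [AddCommGroup M] [Module K M] {N : ℕ} {c : ℕ → M}
    (h : ∀ a : K, ∑ k ∈ range N, a ^ k • c k = 0) {n : ℕ} (hn : n < N) : c n = 0 := by
  refine (Module.forall_dual_apply_eq_zero_iff K (c n)).mp fun φ => ?_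
  have hq : ∑ k ∈ range N, C (φ (c k)) * X ^ k = 0 := Polynomial.funext fun a => by
    rw [eval_finsetSum, eval_zero, ← map_zero φ, ← h a, map_sum]
    exact sum_congr rfl fun k _ => by
      simp only [eval_mul, eval_C, eval_pow, eval_X, map_smul, smul_eq_mul]; ring
  simpa [finsetSum_coeff, coeff_C_mul, coeff_X_pow, hn] using congrArg (coeff · n) hq

theorem Module.Basis.exists_sum_pow_smul_of_repr_eq_eval {R M ι : Type*} [CommRing R]
    [AddCommGroup M] [Module R M] [Fintype ι] (b : Module.Basis ι R M) (f : R → M)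
    (h : ∀ i, ∃ p : R[X], ∀ a, b.repr (f a) i = p.eval a) :
    ∃ (N : ℕ) (c : ℕ → M), (∀ n, N ≤ n → c n = 0) ∧
      ∀ a, f a = ∑ n ∈ range N, a ^ n • c n := by
  choose p hp using h
  set N := univ.sup (fun i => (p i).natDegree) + 1
  have hdeg : ∀ i, (p i).natDegree < N :=
    fun i => Nat.lt_succ_of_le (Finset.le_sup (f := fun i => (p i).natDegree) (mem_univ i))
  refine ⟨N, fun n => ∑ i, (p i).coeff n • b i, fun n hn => ?_, fun a => b.repr.injective ?_⟩
  · refine sum_eq_zero fun i _ => ?_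
    rw [coeff_eq_zero_of_natDegree_lt ((hdeg i).trans_le hn), zero_smul]
  · ext i
    classical
    simp [hp, eval_eq_sum_range' (hdeg i), mul_comm, Finsupp.finsetSum_apply, Finsupp.single_apply]

theorem mul_eq_ite_of_map_mul_of_eq_sum_pow_smul {K A : Type*} [Field K] [Infinite K] [Ring A]
    [Algebra K A] {ρ : K → A} {N : ℕ} {P : ℕ → A} (hP : ∀ a, ρ a = ∑ n ∈ range N, a ^ n • P n)
    (hvan : ∀ n, N ≤ n → P n = 0) (hmul : ∀ a b, ρ (a * b) = ρ a * ρ b) (m k : ℕ) :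
    P m * P k = if m = k then P m else 0 := by
  rcases le_or_gt N m with hm | hm
  · simp [hvan m hm]
  rcases le_or_gt N k with hk | hk
  · rw [hvan k hk, mul_zero, if_neg (by omega)]
  have hexpand : ∀ a b : K,
      ∑ m ∈ range N, a ^ m • (b ^ m • P m - ∑ k ∈ range N, b ^ k • (P m * P k)) = 0 := by
    intro a b
    have := hmul a b
    simp only [hP, sum_mul, mul_sum, smul_mul_smul_comm, mul_pow, mul_smul] at this
    simp only [smul_sub, smul_sum, sum_sub_distrib, sub_eq_zero]
    exact this.trans sum_comm
  have hcoeff_a : ∀ b : K, b ^ m • P m = ∑ k ∈ range N, b ^ k • (P m * P k) :=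
    fun b => sub_eq_zero.mp (eq_zero_of_forall_sum_pow_smul_eq_zero (hexpand · b) hm)
  have hcoeff_b : ∀ b : K,
      ∑ k ∈ range N, b ^ k • (P m * P k - if m = k then P m else 0) = 0 := by
    intro b
    simp [smul_sub, sum_sub_distrib, smul_ite, ← hcoeff_a b, hm]
  exact sub_eq_zero.mp (eq_zero_of_forall_sum_pow_smul_eq_zero hcoeff_b hk)

theorem sum_pow_smul_mul_eq_pow_smul {K A : Type*} [CommSemiring K] [Semiring A] [Algebra K A]
    {N : ℕ} {P : ℕ → A} (horth : ∀ m k, P m * P k = if m = k then P m else 0)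
    (hvan : ∀ n, N ≤ n → P n = 0) (a : K) (n : ℕ) :
    (∑ m ∈ range N, a ^ m • P m) * P n = a ^ n • P n := by
  simp only [sum_mul, smul_mul_assoc, horth, smul_ite, smul_zero, sum_ite_eq', mem_range]
  split_ifs with hn
  · rfl
  · rw [hvan n (not_lt.mp hn), smul_zero]

theorem DirectSum.isInternal_range_of_mul_eq_ite_of_sum_eq_one {R M ι : Type*} [Ring R]
    [AddCommGroup M] [Module R M] [DecidableEq ι] {P : ι → Module.End R M} {s : Finset ι}
    (horth : ∀ i j, P i * P j = if i = j then P i else 0) (hsum : ∑ i ∈ s, P i = 1) :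
    DirectSum.IsInternal fun i => LinearMap.range (P i) := by
  apply DirectSum.isInternal_submodule_of_iSupIndep_of_iSup_eq_top
  · intro i
    rw [disjoint_iff_inf_le]
    rintro _ ⟨⟨u, rfl⟩, hu⟩
    have hker : ⨆ (j) (_ : j ≠ i), LinearMap.range (P j) ≤ LinearMap.ker (P i) :=
      iSup₂_le fun j hj => by
        rintro _ ⟨w, rfl⟩
        simp [LinearMap.mem_ker, ← Module.End.mul_apply, horth, Ne.symm hj]
    have := hker hu
    rw [LinearMap.mem_ker, ← Module.End.mul_apply, horth, if_pos rfl] at this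
    simp [this]
  · refine eq_top_iff.mpr fun v _ => ?_
    rw [show v = ∑ i ∈ s, P i v by rw [← LinearMap.sum_apply, hsum]; rfl]
    exact Submodule.sum_mem _ fun i _ => Submodule.mem_iSup_of_mem i (LinearMap.mem_range_self _ _)

/-- A polynomial representation of the multiplicative monoid `(ℝ, ·)` on a
finite-dimensional real vector space decomposes the space into a direct sum of
weight spaces on which `ρ a` acts as multiplication by `aⁿ`. -/
theorem polynomial_monoid_rep_graded
    (V : Type) [AddCommGroup V] [Module ℝ V] [FiniteDimensional ℝ V]
    (ρ : ℝ → (V →ₗ[ℝ] V))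
    (hmul : ∀ a b : ℝ, ρ (a * b) = ρ a ∘ₗ ρ b)
    (hone : ρ 1 = LinearMap.id)
    (hpoly : ∀ (φ : V →ₗ[ℝ] ℝ) (v : V), ∃ p : Polynomial ℝ,
      ∀ a : ℝ, φ (ρ a v) = p.eval a) :
    ∃ W : ℕ → Submodule ℝ V, DirectSum.IsInternal W ∧
      ∀ (n : ℕ) (a : ℝ) (v : V), v ∈ W n → ρ a v = a ^ n • v := by
  classical
  let b := Module.finBasis ℝ V
  obtain ⟨N, P, hvan, hP⟩ := b.end.exists_sum_pow_smul_of_repr_eq_eval ρ fun ij => by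
    simpa [Matrix.stdBasis, LinearMap.toMatrix_apply] using
      hpoly (b.coord ij.1) (b ij.2)
  have horth := mul_eq_ite_of_map_mul_of_eq_sum_pow_smul hP hvan hmul
  have hsum : ∑ n ∈ range N, P n = 1 := (by simpa using (hP 1).symm : _ = ρ 1).trans hone
  refine ⟨fun n => LinearMap.range (P n),
    DirectSum.isInternal_range_of_mul_eq_ite_of_sum_eq_one horth hsum, ?_⟩
  rintro n a _ ⟨u, rfl⟩
  calc ρ a (P n u) = (ρ a * P n) u := rfl
    _ = a ^ n • P n u := by rw [hP a, sum_pow_smul_mul_eq_pow_smul horth hvan]; rfl
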